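/- arXiv:1604.08846 — 3 statements merged into one kernel-verified Lean document; each statement's English description precedes it below -/
import Mathlib

section
/- Let f be convex differentiable with ν-Hölder continuous gradient of constant L_ν, ν ∈ (0,1). For any δ > 0, if L̂ ≥ ((1−ν)/(δ(1+ν)))^{(1−ν)/(1+ν)} · L_ν^{2/(1+ν)}, then f(x) ≤ f(y) + ⟨∇f(y), x − y⟩ + (L̂/2)‖x − y‖² + δ/2 for all x, y. -/
/-!
Along the segment from `y` to `x`, the Hölder condition bounds the growth of the derivative of
`t ↦ f (y + t • (x - y))` by `L t ^ ν ‖x - y‖ ^ (1 + ν)`; comparing with the first-order model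
gives the Hölder descent inequality with remainder `L / (1 + ν) * ‖x - y‖ ^ (1 + ν)`. Weighted
AM–GM with weights `(1 ± ν) / 2` then trades this power of `‖x - y‖` for a quadratic term plus
`δ / 2`, and `L̂` is the smallest constant for which that trade is possible.
-/

open RealInnerProductSpace Set

noncomputable def holderQuadraticConstant (ν L δ : ℝ) : ℝ :=
  ((1 - ν) / (δ * (1 + ν))) ^ ((1 - ν) / (1 + ν)) * L ^ (2 / (1 + ν))

theorem div_mul_rpow_le_holderQuadraticConstant_mul_sq_add {ν L δ t : ℝ} (hν₀ : -1 < ν)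
    (hν₁ : ν < 1) (hL : 0 ≤ L) (hδ : 0 < δ) (ht : 0 ≤ t) :
    L / (1 + ν) * t ^ (1 + ν) ≤ holderQuadraticConstant ν L δ / 2 * t ^ 2 + δ / 2 := by
  have hν : 0 < 1 + ν := by linarith
  set A := (1 - ν) / (δ * (1 + ν)) with hA_def
  have hA : 0 < A := div_pos (by linarith) (by positivity)
  set M := holderQuadraticConstant ν L δ with hM_def
  have hM : 0 ≤ M := by unfold M holderQuadraticConstant; positivity
  have hMpow : M ^ ((1 + ν) / 2) = A ^ ((1 - ν) / 2) * L := by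
    rw [hM_def, holderQuadraticConstant, Real.mul_rpow (by positivity) (by positivity),
      ← Real.rpow_mul hA.le, ← Real.rpow_mul hL]
    rw [show (1 - ν) / (1 + ν) * ((1 + ν) / 2) = (1 - ν) / 2 by field_simp,
      show 2 / (1 + ν) * ((1 + ν) / 2) = 1 by field_simp, Real.rpow_one]
  have htpow : (t ^ 2) ^ ((1 + ν) / 2) = t ^ (1 + ν) := by
    rw [← Real.rpow_natCast, ← Real.rpow_mul ht]; congr 1; push_cast; ring
  -- `A` is chosen so that the second term of the weighted AM–GM is exactly `δ (1 + ν) / 2`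
  have amgm := Real.geom_mean_le_arith_mean2_weighted (p₁ := M * t ^ 2) (p₂ := A⁻¹)
    (by linarith : 0 ≤ (1 + ν) / 2) (by linarith : 0 ≤ (1 - ν) / 2) (by positivity)
    (inv_nonneg.2 hA.le) (by ring)
  have hlhs : (M * t ^ 2) ^ ((1 + ν) / 2) * A⁻¹ ^ ((1 - ν) / 2) = L * t ^ (1 + ν) := by
    rw [Real.mul_rpow hM (by positivity), hMpow, htpow, Real.inv_rpow hA.le]
    field_simp [(Real.rpow_pos_of_pos hA ((1 - ν) / 2)).ne']
  have hrhs : (1 - ν) / 2 * A⁻¹ = δ * (1 + ν) / 2 := by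
    rw [hA_def, inv_div]; field_simp [(by linarith : (1 : ℝ) - ν ≠ 0)]
  rw [hlhs, hrhs] at amgm
  rw [div_mul_eq_mul_div, div_le_iff₀ hν]
  linarith

variable {E : Type*} [NormedAddCommGroup E] [InnerProductSpace ℝ E] [CompleteSpace E]

theorem hasDerivAt_comp_add_smul {f : E → ℝ} (hf : Differentiable ℝ f) (x v : E) (t : ℝ) :
    HasDerivAt (fun s : ℝ => f (x + s • v)) ⟪gradient f (x + t • v), v⟫ t := by
  have hline : HasDerivAt (fun s : ℝ => x + s • v) v t := by
    simpa using ((hasDerivAt_id t).smul_const v).const_add x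
  exact (hf _).hasGradientAt.hasFDerivAt.comp_hasDerivAt t hline

theorem inner_gradient_add_smul_sub_le {f : E → ℝ} {ν L : ℝ} (hν : 1 + ν ≠ 0)
    (hhold : ∀ x y, ‖gradient f x - gradient f y‖ ≤ L * ‖x - y‖ ^ ν) (x v : E) {t : ℝ}
    (ht : 0 ≤ t) :
    ⟪gradient f (x + t • v) - gradient f x, v⟫ ≤ L * t ^ ν * ‖v‖ ^ (1 + ν) := by
  calc ⟪gradient f (x + t • v) - gradient f x, v⟫
      ≤ ‖gradient f (x + t • v) - gradient f x‖ * ‖v‖ := real_inner_le_norm _ _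
    _ ≤ L * ‖t • v‖ ^ ν * ‖v‖ := by
        gcongr
        simpa using hhold (x + t • v) x
    _ = L * t ^ ν * ‖v‖ ^ (1 + ν) := by
        rw [norm_smul, Real.norm_of_nonneg ht, Real.mul_rpow ht (norm_nonneg _),
          Real.rpow_add' (norm_nonneg _) hν, Real.rpow_one]
        ring

theorem le_add_inner_gradient_add_rpow_of_holder {f : E → ℝ} (hf : Differentiable ℝ f)
    {ν L : ℝ} (hν : -1 < ν) (hhold : ∀ x y, ‖gradient f x - gradient f y‖ ≤ L * ‖x - y‖ ^ ν)
    (x y : E) :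
    f x ≤ f y + ⟪gradient f y, x - y⟫ + L / (1 + ν) * ‖x - y‖ ^ (1 + ν) := by
  have hν' : 0 < 1 + ν := by linarith
  set v := x - y
  set c := L / (1 + ν) * ‖v‖ ^ (1 + ν)
  set φ : ℝ → ℝ := fun t => f (y + t • v) - t * ⟪gradient f y, v⟫ - c * t ^ (1 + ν)
  have hφ_deriv : ∀ t ∈ Ioo 0 1, HasDerivAt φ
      (⟪gradient f (y + t • v), v⟫ - ⟪gradient f y, v⟫ - c * ((1 + ν) * t ^ ν)) t := by
    intro t ht
    have hpow := Real.hasDerivAt_rpow_const (p := 1 + ν) (Or.inl ht.1.ne')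
    rw [add_sub_cancel_left] at hpow
    exact ((hasDerivAt_comp_add_smul hf y v t).sub
      (hasDerivAt_mul_const ⟪gradient f y, v⟫)).sub (hpow.const_mul c)
  have hφ_cont : ContinuousOn φ (Icc 0 1) := by
    refine ContinuousOn.sub (Continuous.continuousOn ?_) fun t _ =>
      (Real.continuousAt_rpow_const t _ (Or.inr hν'.le)).continuousWithinAt.const_mul c
    exact (hf.continuous.comp (by fun_prop)).sub (by fun_prop)
  have hφ : AntitoneOn φ (Icc 0 1) := by
    rw [← interior_Icc (a := (0 : ℝ)) (b := 1)] at hφ_deriv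
    refine antitoneOn_of_hasDerivWithinAt_nonpos (convex_Icc 0 1) hφ_cont
      (fun t ht => (hφ_deriv t ht).hasDerivWithinAt) fun t ht => ?_
    rw [interior_Icc] at ht
    have := inner_gradient_add_smul_sub_le hν'.ne' hhold y v ht.1.le
    rw [inner_sub_left] at this
    have : c * ((1 + ν) * t ^ ν) = L * t ^ ν * ‖v‖ ^ (1 + ν) := by
      unfold c; field_simp
    linarith
  have h01 := hφ (left_mem_Icc.2 zero_le_one) (right_mem_Icc.2 zero_le_one) zero_le_one
  simp only [φ, zero_smul, add_zero, one_smul, one_mul, zero_mul, Real.one_rpow, mul_one,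
    Real.zero_rpow hν'.ne', sub_zero, v, add_sub_cancel] at h01
  linarith

theorem holder_inexact_quadratic_upper_bound_general {n : ℕ} (f : EuclideanSpace ℝ (Fin n) → ℝ)
    (hdiff : Differentiable ℝ f)
    (ν L δ Lhat : ℝ) (hν0 : 0 < ν) (hν1 : ν < 1) (hL : 0 < L) (hδ : 0 < δ)
    (hhold : ∀ x y, ‖gradient f x - gradient f y‖ ≤ L * ‖x - y‖ ^ ν)
    (hLhat : ((1 - ν) / (δ * (1 + ν))) ^ ((1 - ν) / (1 + ν)) * L ^ (2 / (1 + ν)) ≤ Lhat) :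
    ∀ x y, f x ≤ f y + ⟪gradient f y, x - y⟫ + (Lhat / 2) * ‖x - y‖ ^ 2 + δ / 2 := by
  intro x y
  calc f x ≤ f y + ⟪gradient f y, x - y⟫ + L / (1 + ν) * ‖x - y‖ ^ (1 + ν) :=
        le_add_inner_gradient_add_rpow_of_holder hdiff (by linarith) hhold x y
    _ ≤ f y + ⟪gradient f y, x - y⟫ +
          (holderQuadraticConstant ν L δ / 2 * ‖x - y‖ ^ 2 + δ / 2) := by
        gcongr
        exact div_mul_rpow_le_holderQuadraticConstant_mul_sq_add (by linarith) hν1 hL.le hδ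
          (norm_nonneg _)
    _ ≤ f y + ⟪gradient f y, x - y⟫ + (Lhat / 2) * ‖x - y‖ ^ 2 + δ / 2 := by
        rw [← add_assoc]
        gcongr
        exact hLhat

/-- Nesterov's smoothing inequality: a function with ν-Hölder continuous gradient
satisfies an inexact descent inequality with quadratic upper model. -/
theorem holder_inexact_quadratic_upper_bound {n : ℕ} (f : EuclideanSpace ℝ (Fin n) → ℝ)
    (hconv : ConvexOn ℝ Set.univ f) (hdiff : Differentiable ℝ f)
    (ν L δ Lhat : ℝ) (hν0 : 0 < ν) (hν1 : ν < 1) (hL : 0 < L) (hδ : 0 < δ)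
    (hhold : ∀ x y, ‖gradient f x - gradient f y‖ ≤ L * ‖x - y‖ ^ ν)
    (hLhat : ((1 - ν) / (δ * (1 + ν))) ^ ((1 - ν) / (1 + ν)) * L ^ (2 / (1 + ν)) ≤ Lhat) :
    ∀ x y, f x ≤ f y + ⟪gradient f y, x - y⟫ + (Lhat / 2) * ‖x - y‖ ^ 2 + δ / 2 :=
  holder_inexact_quadratic_upper_bound_general f hdiff ν L δ Lhat hν0 hν1 hL hδ hhold hLhat
end

section
/- Suppose the line-search updates satisfy L_{i+1} = γ₂ γ₁^{p_i} L_i for i = 0,…,k with γ₁ > 1, 0 < γ₂ < 1, L_0 > 0, integers p_i ≥ 0, and L_{k+1} ≤ γ₁ γ₂ L̃ for some L̃ > 0. Then the total oracle count N(k) = Σ_{i=0}^{k} (2 p_i + 2) satisfies N(k) ≤ 2(1 − ln γ₂ / ln γ₁)(k+1) + (2/ln γ₁) ln(γ₁ γ₂ L̃ / L_0). -/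
/-!
Unrolling the recursion gives `L (k+1) = L₀ γ₂^(k+1) γ₁^(∑ pᵢ)`. Taking logarithms in
`L (k+1) ≤ γ₁ γ₂ L̃` bounds `∑ pᵢ` by `(log (γ₁ γ₂ L̃ / L₀) - (k+1) log γ₂) / log γ₁`, and the
oracle count is `2 ∑ pᵢ + 2 (k+1)`.
-/

open Finset Real

theorem eq_mul_pow_mul_rpow_sum_of_rec {b c : ℝ} (hb : 0 < b) {p L : ℕ → ℝ} {n : ℕ}
    (hrec : ∀ i < n, L (i + 1) = c * b ^ p i * L i) :
    L n = L 0 * c ^ n * b ^ ∑ i ∈ range n, p i := by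
  induction n with
  | zero => simp
  | succ m ih =>
    rw [hrec m m.lt_succ_self, ih fun i hi => hrec i (hi.trans m.lt_succ_self),
      sum_range_succ, rpow_add hb, pow_succ]
    ring

theorem sum_le_of_rec_of_le {b c M : ℝ} (hb : 1 < b) (hc : 0 < c) {p L : ℕ → ℝ} {n : ℕ}
    (hL0 : 0 < L 0) (hrec : ∀ i < n, L (i + 1) = c * b ^ p i * L i) (hle : L n ≤ M) :
    ∑ i ∈ range n, p i ≤ (log (M / L 0) - n * log c) / log b := by
  have hb0 : 0 < b := one_pos.trans hb
  have hLn := eq_mul_pow_mul_rpow_sum_of_rec hb0 hrec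
  have hpos : 0 < L n := by rw [hLn]; positivity
  have hlog : log (L n) = log (L 0) + n * log c + (∑ i ∈ range n, p i) * log b := by
    rw [hLn, log_mul (by positivity) (by positivity), log_mul hL0.ne' (by positivity),
      log_pow, log_rpow hb0]
  have hmono : log (L n) ≤ log M := log_le_log hpos hle
  rw [le_div_iff₀ (log_pos hb), log_div (hpos.trans_le hle).ne' hL0.ne']
  linarith

open Finset in
theorem oracle_count_bound_general (k : ℕ) (γ₁ γ₂ L₀ Lt : ℝ) (p : ℕ → ℝ) (L : ℕ → ℝ)
    (hγ₁ : 1 < γ₁) (hγ₂0 : 0 < γ₂) (hL₀ : 0 < L₀)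
    (hL0 : L 0 = L₀)
    (hrec : ∀ i ≤ k, L (i + 1) = γ₂ * γ₁ ^ (p i) * L i)
    (hlast : L (k + 1) ≤ γ₁ * γ₂ * Lt) :
    ∑ i ∈ range (k + 1), (2 * p i + 2) ≤
      2 * (1 - Real.log γ₂ / Real.log γ₁) * (k + 1)
        + (2 / Real.log γ₁) * Real.log (γ₁ * γ₂ * Lt / L₀) := by
  subst hL0
  have hS := sum_le_of_rec_of_le hγ₁ hγ₂0 hL₀ (fun i hi => hrec i (Nat.lt_succ_iff.mp hi)) hlast
  have hcount : ∑ i ∈ range (k + 1), (2 * p i + 2) =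
      2 * ∑ i ∈ range (k + 1), p i + 2 * (k + 1) := by
    rw [sum_add_distrib, ← mul_sum]
    simp only [sum_const, card_range, nsmul_eq_mul]
    push_cast
    ring
  rw [hcount]
  calc 2 * ∑ i ∈ range (k + 1), p i + 2 * (k + 1)
      ≤ 2 * ((log (γ₁ * γ₂ * Lt / L 0) - ↑(k + 1) * log γ₂) / log γ₁) + 2 * (k + 1) := by
        linarith
    _ = _ := by
        have := (log_pos hγ₁).ne'
        push_cast
        field_simp
        ring

open Finset in
/-- Bound on the total number of oracle calls of the backtracking line search. -/
theorem oracle_count_bound (k : ℕ) (γ₁ γ₂ L₀ Lt : ℝ) (p : ℕ → ℝ) (L : ℕ → ℝ)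
    (hγ₁ : 1 < γ₁) (hγ₂0 : 0 < γ₂) (hγ₂1 : γ₂ < 1) (hL₀ : 0 < L₀) (hLt : 0 < Lt)
    (hp : ∀ i, 0 ≤ p i) (hL0 : L 0 = L₀)
    (hrec : ∀ i ≤ k, L (i + 1) = γ₂ * γ₁ ^ (p i) * L i)
    (hlast : L (k + 1) ≤ γ₁ * γ₂ * Lt) :
    ∑ i ∈ range (k + 1), (2 * p i + 2) ≤
      2 * (1 - Real.log γ₂ / Real.log γ₁) * (k + 1)
        + (2 / Real.log γ₁) * Real.log (γ₁ * γ₂ * Lt / L₀) :=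
  oracle_count_bound_general k γ₁ γ₂ L₀ Lt p L hγ₁ hγ₂0 hL₀ hL0 hrec hlast
end

section
/- Let h: ℝ^n → ℝ be strictly convex and continuous with unique minimizer x* lying in the interior of a closed convex set C, and let δ > 0 be such that N(x*) = {x ∈ C : ‖x − x*‖ ≤ δ} ⊆ C. Let x_δ minimize h over the boundary ∂N(x*), and set ε_δ = h(x_δ) − h(x*). Then the level set N_h(x_δ) = {x ∈ C : h(x) ≤ h(x*) + ε_δ} is contained in N(x*). -/
/-- For a strictly convex function with interior minimizer, the level set at the
minimum value over the sphere of radius δ is contained in the δ-ball. -/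
theorem level_set_in_ball {n : ℕ} (h : EuclideanSpace ℝ (Fin n) → ℝ)
    (hstrict : StrictConvexOn ℝ Set.univ h) (hcont : Continuous h)
    (C : Set (EuclideanSpace ℝ (Fin n))) (hclosed : IsClosed C) (hconv : Convex ℝ C)
    (xstar : EuclideanSpace ℝ (Fin n)) (hint : xstar ∈ interior C)
    (hmin : ∀ x ∈ C, x ≠ xstar → h xstar < h x)
    (δ : ℝ) (hδ : 0 < δ) (hball : Metric.closedBall xstar δ ⊆ C)
    (xδ : EuclideanSpace ℝ (Fin n)) (hxδ : ‖xδ - xstar‖ = δ)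
    (hxδmin : ∀ x, ‖x - xstar‖ = δ → h xδ ≤ h x) :
    {x ∈ C | h x ≤ h xstar + (h xδ - h xstar)} ⊆ Metric.closedBall xstar δ := by
  intro x hx
  obtain ⟨hxC, hxh⟩ := hx
  rw [add_sub_cancel] at hxh
  by_contra hcon
  rw [Metric.mem_closedBall, dist_eq_norm] at hcon
  push_neg at hcon
  set r := ‖x - xstar‖ with hr
  have hrpos : 0 < r := lt_trans hδ hcon
  set t : ℝ := δ / r with ht
  have ht0 : 0 < t := div_pos hδ hrpos
  have ht1 : t < 1 := (div_lt_one hrpos).2 hcon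
  set y := (1 - t) • xstar + t • x with hy
  have hxne : x ≠ xstar := by
    intro hc
    rw [hc, sub_self, norm_zero] at hr
    exact (lt_irrefl 0 (hr ▸ hrpos))
  have hyn : ‖y - xstar‖ = δ := by
    have : y - xstar = t • (x - xstar) := by
      rw [hy]; module
    rw [this, norm_smul, Real.norm_eq_abs, abs_of_pos ht0, ht, ← hr,
      div_mul_cancel₀ _ (ne_of_gt hrpos)]
  have hxstar_lt : h xstar < h x := hmin x hxC hxne
  have hconvx : h y < (1 - t) * h xstar + t * h x :=
    hstrict.2 (Set.mem_univ xstar) (Set.mem_univ x) hxne.symm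
      (by linarith) ht0 (by ring)
  have hyx : h y < h x := lt_of_lt_of_le hconvx (by nlinarith)
  have := hxδmin y hyn
  linarith
end
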